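/- arXiv:2604.01336 — 4 statements merged into one kernel-verified Lean document; each statement's English description precedes it below -/
import Mathlib

section
/- (Discrete sewing bound) Let π = {0 = t₀ < t₁ < ⋯ < tₙ = T} be a partition, let h be a real-valued function on pairs of partition points with h(tᵢ, tᵢ₊₁) = 0 for all 0 ≤ i < n, and let μ > 1. If ‖δh‖_μ := sup over partition points s ≤ u ≤ t of |h(s,t) - h(s,u) - h(u,t)|/(t-s)^μ is finite, then there exists a constant C_μ depending only on μ such that |h(s,t)| ≤ C_μ ‖δh‖_μ (t-s)^μ for all partition points s ≤ t. -/
lemma tri_aux (X Y Z : ℝ) : |X| ≤ |X - Y - Z| + |Y| + |Z| := by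
  calc |X| = |(X - Y - Z) + Y + Z| := by ring_nf
  _ ≤ |(X - Y - Z) + Y| + |Z| := abs_add_le _ _
  _ ≤ |X - Y - Z| + |Y| + |Z| := by
      have := abs_add_le (X - Y - Z) Y
      linarith

/-- Discrete sewing bound. For any `μ > 1` there is a constant `C_μ > 0`
such that for any partition `0 = t₀ < ⋯ < tₙ = T`, any `h` on pairs of partition points
vanishing on consecutive pairs, and any `D ≥ 0` bounding
`|δh(s,u,t)| ≤ D (t-s)^μ`, one has `|h(s,t)| ≤ C_μ D (t-s)^μ`. -/
theorem stmt_2 (μ : ℝ) (hμ : 1 < μ) :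
    ∃ C : ℝ, 0 < C ∧
      ∀ (T : ℝ) (n : ℕ) (_hn : 0 < n) (t : Fin (n + 1) → ℝ),
        StrictMono t → t 0 = 0 → t (Fin.last n) = T →
        ∀ (h : ℝ → ℝ → ℝ) (D : ℝ), 0 ≤ D →
        (∀ i : Fin n, h (t i.castSucc) (t i.succ) = 0) →
        (∀ i j k : Fin (n + 1), i ≤ j → j ≤ k →
          |h (t i) (t k) - h (t i) (t j) - h (t j) (t k)| ≤ D * (t k - t i) ^ μ) →
        ∀ i k : Fin (n + 1), i ≤ k →
          |h (t i) (t k)| ≤ C * D * (t k - t i) ^ μ := by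
  classical
  have hμ0 : (0:ℝ) < μ := by linarith
  set x : ℝ := (2:ℝ) ^ (1 - μ) with hxdef
  have hx0 : (0:ℝ) < x := Real.rpow_pos_of_pos (by norm_num) _
  have hx1 : x < 1 := Real.rpow_lt_one_of_one_lt_of_neg (by norm_num) (by linarith)
  have h1x : (0:ℝ) < 1 - x := by linarith
  refine ⟨2 / (1 - x), div_pos (by norm_num) h1x, ?_⟩
  set C : ℝ := 2 / (1 - x) with hCdef
  have hCpos : 0 < C := div_pos (by norm_num) h1x
  have hC : C * x + 2 = C := by
    rw [hCdef]
    field_simp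
    ring
  intro T n hn t ht ht0 htT h D hD hcons hδ
  have hmono : ∀ i k : Fin (n+1), i ≤ k → t i ≤ t k := fun i k hik => ht.monotone hik
  suffices H : ∀ d : ℕ, ∀ i k : Fin (n+1), i ≤ k → (k:ℕ) - (i:ℕ) ≤ d →
      |h (t i) (t k)| ≤ C * D * (t k - t i) ^ μ by
    intro i k hik
    exact H ((k:ℕ) - (i:ℕ)) i k hik le_rfl
  -- base cases as lemmas
  have base0 : ∀ i : Fin (n+1), |h (t i) (t i)| ≤ C * D * (t i - t i) ^ μ := by
    intro i
    have h1 := hδ i i i le_rfl le_rfl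
    have hz : (t i - t i) ^ μ = 0 := by
      rw [sub_self, Real.zero_rpow (ne_of_gt hμ0)]
    rw [hz] at h1 ⊢
    have : |h (t i) (t i) - h (t i) (t i) - h (t i) (t i)| = |h (t i) (t i)| := by
      rw [show h (t i) (t i) - h (t i) (t i) - h (t i) (t i) = -(h (t i) (t i)) by ring,
        abs_neg]
    rw [this] at h1
    simpa using h1
  have base1 : ∀ i k : Fin (n+1), (k:ℕ) = (i:ℕ) + 1 →
      |h (t i) (t k)| ≤ C * D * (t k - t i) ^ μ := by
    intro i k hik1
    have hin : (i:ℕ) < n := by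
      have := k.isLt; omega
    have hz : h (t i) (t k) = 0 := by
      have := hcons ⟨(i:ℕ), hin⟩
      have e1 : (Fin.castSucc ⟨(i:ℕ), hin⟩) = i := by
        apply Fin.ext; simp
      have e2 : (Fin.succ ⟨(i:ℕ), hin⟩) = k := by
        apply Fin.ext; simp [hik1]
      rwa [e1, e2] at this
    rw [hz, abs_zero]
    have hle : t i ≤ t k := hmono i k (by rw [Fin.le_def]; omega)
    exact mul_nonneg (mul_nonneg hCpos.le hD) (Real.rpow_nonneg (by linarith) _)
  intro d
  induction d with
  | zero =>
    intro i k hik hd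
    have hik' : (i:ℕ) ≤ (k:ℕ) := hik
    have : i = k := Fin.ext (by omega)
    subst this
    exact base0 i
  | succ d ih =>
    intro i k hik hd
    have hik' : (i:ℕ) ≤ (k:ℕ) := hik
    rcases Nat.lt_or_ge (k:ℕ) ((i:ℕ)+2) with hsmall | hbig
    · -- gap 0 or 1
      rcases Nat.lt_or_ge (k:ℕ) ((i:ℕ)+1) with h0 | h1
      · have : i = k := Fin.ext (by omega)
        subst this
        exact base0 i
      · exact base1 i k (by omega)
    · -- main case : gap ≥ 2
      set L : ℝ := t k - t i with hLdef
      have hkn : (k:ℕ) ≤ n := by have := k.isLt; omega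
      have hLpos : 0 < L := sub_pos.mpr (ht (by rw [Fin.lt_def]; omega))
      set u : ℕ → ℝ := fun a => t ⟨min a n, Nat.lt_succ_of_le (min_le_right a n)⟩ with hudef
      set Q : ℕ → Prop := fun a => u a ≤ t i + L/2 with hQdef
      have hui : u (i:ℕ) = t i := by
        show t ⟨min (i:ℕ) n, _⟩ = t i
        congr 1
        exact Fin.ext (by have := i.isLt; simp; omega)
      have hQi : Q (i:ℕ) := by
        show u (i:ℕ) ≤ t i + L/2
        rw [hui]
        linarith
      obtain ⟨jn, hjn_ge, hjn_le, hQjn, hjn_max⟩ :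
          ∃ m : ℕ, (i:ℕ) ≤ m ∧ m ≤ (k:ℕ) - 1 ∧ Q m ∧
            ∀ m', m < m' → m' ≤ (k:ℕ) - 1 → ¬ Q m' :=
        ⟨Nat.findGreatest Q ((k:ℕ) - 1), Nat.le_findGreatest (by omega) hQi,
          Nat.findGreatest_le _, Nat.findGreatest_spec (m := (i:ℕ)) (by omega) hQi,
          fun m' h1 h2 => Nat.findGreatest_is_greatest h1 h2⟩
      set j : Fin (n+1) := ⟨jn, by omega⟩ with hjdef
      have hjval : (j:ℕ) = jn := rfl
      have huj : u jn = t j := by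
        show t ⟨min jn n, _⟩ = t j
        congr 1
        exact Fin.ext (by simp; omega)
      have htj : t j ≤ t i + L/2 := by
        have hq : u jn ≤ t i + L/2 := hQjn
        rwa [huj] at hq
      have hij_le : i ≤ j := by rw [Fin.le_def]; exact hjn_ge
      have hjk_le : j ≤ k := by rw [Fin.le_def]; simp [hjdef]; omega
      -- first split
      have hA := hδ i j k hij_le hjk_le
      have A : |h (t i) (t k)| ≤ |h (t i) (t j)| + |h (t j) (t k)| + D * L ^ μ := by
        have := tri_aux (h (t i) (t k)) (h (t i) (t j)) (h (t j) (t k))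
        rw [← hLdef] at hA
        linarith
      -- bound on h(i,j)
      have htij : t i ≤ t j := hmono i j hij_le
      have h1 : |h (t i) (t j)| ≤ C * D * (t j - t i) ^ μ := by
        refine ih i j hij_le ?_
        have gap1 : jn - (i:ℕ) ≤ d := by omega
        exact gap1
      have hr1 : (t j - t i) ^ μ ≤ (L/2) ^ μ :=
        Real.rpow_le_rpow (by linarith) (by linarith) hμ0.le
      have h1' : |h (t i) (t j)| ≤ C * D * (L/2) ^ μ := by
        refine h1.trans ?_
        exact mul_le_mul_of_nonneg_left hr1 (mul_nonneg hCpos.le hD)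
      -- bound on h(j,k)
      have h2' : |h (t j) (t k)| ≤ C * D * (L/2) ^ μ + D * L ^ μ := by
        by_cases hjk1 : jn = (k:ℕ) - 1
        · -- j, k consecutive
          have hjn_lt : jn < n := by omega
          have hz : h (t j) (t k) = 0 := by
            have := hcons ⟨jn, hjn_lt⟩
            have e1 : (Fin.castSucc ⟨jn, hjn_lt⟩) = j := by apply Fin.ext; simp [hjdef]
            have e2 : (Fin.succ ⟨jn, hjn_lt⟩) = k := by apply Fin.ext; simp; omega
            rwa [e1, e2] at this
          rw [hz, abs_zero]
          have e1 : (0:ℝ) ≤ (L/2) ^ μ := Real.rpow_nonneg (by linarith) _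
          have e2 : (0:ℝ) ≤ L ^ μ := Real.rpow_nonneg (by linarith) _
          have := mul_nonneg (mul_nonneg hCpos.le hD) e1
          have := mul_nonneg hD e2
          linarith
        · have hlt : jn < (k:ℕ) - 1 := lt_of_le_of_ne hjn_le hjk1
          have hnQ : ¬ Q (jn + 1) := hjn_max (jn + 1) (by omega) (by omega)
          set j1 : Fin (n+1) := ⟨jn + 1, by omega⟩ with hj1def
          have hj1val : (j1:ℕ) = jn + 1 := rfl
          have huj1 : u (jn + 1) = t j1 := by
            show t ⟨min (jn+1) n, _⟩ = t j1
            congr 1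
            exact Fin.ext (by simp; omega)
          have htj1 : t i + L/2 < t j1 := by
            by_contra hc
            push_neg at hc
            exact hnQ (show u (jn+1) ≤ t i + L/2 by rw [huj1]; linarith)
          have hjj1 : j ≤ j1 := by rw [Fin.le_def]; simp [hjdef, hj1def]
          have hj1k : j1 ≤ k := by rw [Fin.le_def]; simp [hj1def]; omega
          have hB := hδ j j1 k hjj1 hj1k
          have hzc : h (t j) (t j1) = 0 := by
            have hjn_lt : jn < n := by omega
            have := hcons ⟨jn, hjn_lt⟩
            have e1 : (Fin.castSucc ⟨jn, hjn_lt⟩) = j := by apply Fin.ext; simp [hjdef]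
            have e2 : (Fin.succ ⟨jn, hjn_lt⟩) = j1 := by apply Fin.ext; simp [hj1def]
            rwa [e1, e2] at this
          have hIH2 : |h (t j1) (t k)| ≤ C * D * (t k - t j1) ^ μ :=
            ih j1 k hj1k (show (k:ℕ) - (jn + 1) ≤ d by omega)
          have htj1k : t k - t j1 ≤ L/2 := by
            rw [hLdef] at htj1 ⊢
            linarith
          have htj1k0 : t j1 ≤ t k := hmono j1 k hj1k
          have hr2 : (t k - t j1) ^ μ ≤ (L/2) ^ μ :=
            Real.rpow_le_rpow (by linarith) htj1k hμ0.le
          have hIH2' : |h (t j1) (t k)| ≤ C * D * (L/2) ^ μ :=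
            hIH2.trans (mul_le_mul_of_nonneg_left hr2 (by positivity))
          have hr3 : (t k - t j) ^ μ ≤ L ^ μ :=
            Real.rpow_le_rpow (by linarith [hmono j k hjk_le]) (by rw [hLdef]; linarith) hμ0.le
          have hB' : |h (t j) (t k) - h (t j) (t j1) - h (t j1) (t k)| ≤ D * L ^ μ :=
            hB.trans (mul_le_mul_of_nonneg_left hr3 hD)
          have htri := tri_aux (h (t j) (t k)) (h (t j) (t j1)) (h (t j1) (t k))
          simp only [hzc, abs_zero, sub_zero] at htri hB'
          linarith
      -- combine
      have key : 2 * (L/2) ^ μ = x * L ^ μ := by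
        rw [Real.div_rpow hLpos.le (by norm_num), hxdef,
          Real.rpow_sub (by norm_num : (0:ℝ) < 2), Real.rpow_one]
        have h2μ : (0:ℝ) < (2:ℝ) ^ μ := Real.rpow_pos_of_pos (by norm_num) _
        field_simp
      have final : C * D * (L/2) ^ μ + (C * D * (L/2) ^ μ + D * L ^ μ) + D * L ^ μ
          = C * D * L ^ μ := by
        linear_combination (D * L ^ μ) * hC + (C * D) * key
      linarith
end

section
/- (Discrete sewing bound, general case) Let π = {0 = t₀ < ⋯ < tₙ = T} be a partition, μ > 1, and h a real function on pairs of partition points. Then ‖h‖_μ ≤ C_μ ‖δh‖_μ + M_μ(h), where ‖h‖_μ = sup_{s ≤ t partition points} |h(s,t)|/(t-s)^μ, ‖δh‖_μ = sup_{s ≤ u ≤ t partition points} |δh(s,u,t)|/(t-s)^μ, M_μ(h) = max_{0 ≤ i < n} |h(tᵢ,tᵢ₊₁)|/(tᵢ₊₁-tᵢ)^μ, and C_μ depends only on μ. -/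
open Finset

private lemma add_rpow_le' {a b μ : ℝ} (ha : 0 ≤ a) (hb : 0 ≤ b) (hμ : 1 ≤ μ) :
    a ^ μ + b ^ μ ≤ (a + b) ^ μ := by
  lift a to NNReal using ha
  lift b to NNReal using hb
  exact_mod_cast NNReal.add_rpow_le_rpow_add a b hμ

private lemma sum_rpow_le' {μ : ℝ} (hμ : 1 ≤ μ) (m : ℕ) (f : ℕ → ℝ)
    (hf : ∀ i, i < m → 0 ≤ f i) :
    ∑ j ∈ range m, (f j) ^ μ ≤ (∑ j ∈ range m, f j) ^ μ := by
  induction m with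
  | zero => simp [Real.zero_rpow (by positivity : μ ≠ 0)]
  | succ m ih =>
    have hs : 0 ≤ ∑ j ∈ range m, f j :=
      Finset.sum_nonneg fun i hi => hf i (lt_of_lt_of_le (Finset.mem_range.1 hi) (Nat.le_succ m))
    have h1 := ih (fun i hi => hf i (Nat.lt_succ_of_lt hi))
    have h2 := add_rpow_le' hs (hf m (Nat.lt_succ_self m)) hμ
    rw [sum_range_succ, sum_range_succ]
    linarith

private lemma mono_of_step {m : ℕ} {x : ℕ → ℝ} (hx : ∀ i, i < m → x i < x (i + 1)) :
    ∀ a b, a ≤ b → b ≤ m → x a ≤ x b := by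
  intro a b hab hbm
  induction b with
  | zero => simp_all
  | succ b ih =>
    rcases Nat.eq_or_lt_of_le hab with rfl | hlt
    · exact le_refl _
    · have h1 : x a ≤ x b := ih (Nat.lt_succ_iff.1 hlt) (le_trans (Nat.le_succ b) hbm)
      exact le_trans h1 (le_of_lt (hx b hbm))

private lemma sewing_key (μ D : ℝ) (hμ : 1 < μ) (hD : 0 ≤ D) (h : ℝ → ℝ → ℝ)
    (S : Set ℝ)
    (Hδ : ∀ a ∈ S, ∀ b ∈ S, ∀ c ∈ S, a ≤ b → b ≤ c →
      |h a c - h a b - h b c| ≤ D * (c - a) ^ μ) :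
    ∀ m : ℕ, ∀ x : ℕ → ℝ, 0 < m → (∀ i, i < m → x i < x (i + 1)) → (∀ i, i ≤ m → x i ∈ S) →
      |h (x 0) (x m) - ∑ j ∈ range m, h (x j) (x (j + 1))|
        ≤ D * (∑ q ∈ range (m - 1), ((2 : ℝ) / (q + 1)) ^ μ) * (x m - x 0) ^ μ := by
  intro m
  induction m using Nat.strong_induction_on with
  | _ m ih =>
    match m with
    | 0 => intro x hm; exact absurd hm (lt_irrefl 0)
    | 1 =>
      intro x _ hmono hmem
      have hspan : 0 ≤ x 1 - x 0 := by linarith [hmono 0 (by norm_num)]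
      simp only [sum_range_one]
      have : |h (x 0) (x 1) - h (x 0) (x 1)| = 0 := by simp
      rw [this]
      positivity
    | (r + 2) =>
      intro x _ hmono hmem
      have hxm : ∀ a b, a ≤ b → b ≤ r + 2 → x a ≤ x b := mono_of_step hmono
      have hspan : 0 ≤ x (r + 2) - x 0 := by
        have := hxm 0 (r + 2) (Nat.zero_le _) (le_refl _); linarith
      -- sum of gaps
      have h1 : ∑ q ∈ range (r + 1), (x (q + 2) - x (q + 1)) = x (r + 2) - x 1 := by
        have := Finset.sum_range_sub (fun q => x (q + 1)) (r + 1)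
        simpa using this
      have h2 : ∑ q ∈ range (r + 1), (x (q + 1) - x q) = x (r + 1) - x 0 :=
        Finset.sum_range_sub x (r + 1)
      have hsum : ∑ q ∈ range (r + 1), (x (q + 2) - x q) ≤ 2 * (x (r + 2) - x 0) := by
        have he : ∑ q ∈ range (r + 1), (x (q + 2) - x q)
            = (x (r + 2) - x 1) + (x (r + 1) - x 0) := by
          rw [← h1, ← h2, ← Finset.sum_add_distrib]
          exact Finset.sum_congr rfl fun q _ => by ring
        have hx1 : x 0 ≤ x 1 := hxm 0 1 (by norm_num) (by omega)
        have hxr : x (r + 1) ≤ x (r + 2) := hxm (r + 1) (r + 2) (by omega) (le_refl _)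
        linarith
      -- a point with small gap
      obtain ⟨q0, hq0mem, hq0⟩ :
          ∃ q ∈ range (r + 1), x (q + 2) - x q ≤ 2 * (x (r + 2) - x 0) / (r + 1) := by
        by_contra hcon
        push_neg at hcon
        have hlt : ∑ q ∈ range (r + 1), (2 * (x (r + 2) - x 0) / (r + 1))
            < ∑ q ∈ range (r + 1), (x (q + 2) - x q) :=
          Finset.sum_lt_sum_of_nonempty (by simp) hcon
        rw [Finset.sum_const, Finset.card_range, nsmul_eq_mul] at hlt
        have hr1 : ((r : ℝ) + 1) ≠ 0 := by positivity
        have heq : ((r + 1 : ℕ) : ℝ) * (2 * (x (r + 2) - x 0) / ((r : ℝ) + 1))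
            = 2 * (x (r + 2) - x 0) := by
          push_cast
          field_simp
        rw [heq] at hlt
        linarith
      have hq0r : q0 < r + 1 := Finset.mem_range.1 hq0mem
      -- the new sequence with q0+1 removed
      set j := q0 + 1 with hj
      set y : ℕ → ℝ := fun i => if i < j then x i else x (i + 1) with hy
      have hy0 : y 0 = x 0 := by simp [hy, hj]
      have hyend : y (r + 1) = x (r + 2) := by
        simp only [hy]
        rw [if_neg (by omega)]
      have hymono : ∀ i, i < r + 1 → y i < y (i + 1) := by
        intro i hi
        simp only [hy]
        rcases lt_trichotomy (i + 1) j with hc | hc | hc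
        · rw [if_pos (by omega), if_pos hc]; exact hmono i (by omega)
        · rw [if_pos (by omega), if_neg (by omega)]
          calc x i < x (i + 1) := hmono i (by omega)
            _ < x (i + 2) := hmono (i + 1) (by omega)
        · rw [if_neg (by omega), if_neg (by omega)]; exact hmono (i + 1) (by omega)
      have hymem : ∀ i, i ≤ r + 1 → y i ∈ S := by
        intro i hi
        simp only [hy]
        split
        · exact hmem i (by omega)
        · exact hmem (i + 1) (by omega)
      -- the sum identity
      have hsplit : ∑ i ∈ range (r + 1), h (y i) (y (i + 1))
          = ∑ i ∈ range (r + 2), h (x i) (x (i + 1))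
            - (h (x q0) (x (q0 + 1)) + h (x (q0 + 1)) (x (q0 + 2)) - h (x q0) (x (q0 + 2))) := by
        have e1 : ∑ i ∈ range (r + 1), h (y i) (y (i + 1))
            = ∑ i ∈ range (q0 + 1), h (y i) (y (i + 1))
              + ∑ i ∈ Ico (q0 + 1) (r + 1), h (y i) (y (i + 1)) :=
          (Finset.sum_range_add_sum_Ico _ (by omega)).symm
        have e2 : ∑ i ∈ range (r + 2), h (x i) (x (i + 1))
            = ∑ i ∈ range (q0 + 2), h (x i) (x (i + 1))
              + ∑ i ∈ Ico (q0 + 2) (r + 2), h (x i) (x (i + 1)) :=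
          (Finset.sum_range_add_sum_Ico _ (by omega)).symm
        have e3 : ∑ i ∈ range (q0 + 1), h (y i) (y (i + 1))
            = ∑ i ∈ range q0, h (x i) (x (i + 1)) + h (x q0) (x (q0 + 2)) := by
          rw [sum_range_succ]
          congr 1
          · exact Finset.sum_congr rfl fun i hi => by
              have hi' := Finset.mem_range.1 hi
              simp only [hy]
              rw [if_pos (by omega), if_pos (by omega)]
          · simp only [hy]
            rw [if_pos (by omega), if_neg (by omega)]
        have e4 : ∑ i ∈ range (q0 + 2), h (x i) (x (i + 1))
            = ∑ i ∈ range q0, h (x i) (x (i + 1))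
              + h (x q0) (x (q0 + 1)) + h (x (q0 + 1)) (x (q0 + 2)) := by
          rw [sum_range_succ, sum_range_succ]
        have e5 : ∑ i ∈ Ico (q0 + 1) (r + 1), h (y i) (y (i + 1))
            = ∑ i ∈ Ico (q0 + 2) (r + 2), h (x i) (x (i + 1)) := by
          rw [Finset.sum_Ico_eq_sum_range, Finset.sum_Ico_eq_sum_range]
          have hlen : r + 1 - (q0 + 1) = r + 2 - (q0 + 2) := by omega
          rw [← hlen]
          refine Finset.sum_congr rfl fun i hi => ?_
          simp only [hy]
          rw [if_neg (by omega), if_neg (by omega)]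
          congr 2 <;> omega
        rw [e1, e3, e5, e2, e4]
        ring
      -- apply induction hypothesis
      have hIH := ih (r + 1) (by omega) y (by omega) hymono hymem
      rw [hy0, hyend] at hIH
      have hδ : |h (x q0) (x (q0 + 2)) - h (x q0) (x (q0 + 1)) - h (x (q0 + 1)) (x (q0 + 2))|
          ≤ D * ((2 : ℝ) / (r + 1)) ^ μ * (x (r + 2) - x 0) ^ μ := by
        have hb := Hδ (x q0) (hmem q0 (by omega)) (x (q0 + 1)) (hmem (q0 + 1) (by omega))
          (x (q0 + 2)) (hmem (q0 + 2) (by omega))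
          (le_of_lt (hmono q0 (by omega))) (le_of_lt (hmono (q0 + 1) (by omega)))
        have hgap0 : 0 ≤ x (q0 + 2) - x q0 := by
          have := hmono q0 (by omega); have := hmono (q0 + 1) (by omega); linarith
        have hpow : (x (q0 + 2) - x q0) ^ μ
            ≤ ((2 : ℝ) / (r + 1)) ^ μ * (x (r + 2) - x 0) ^ μ := by
          have heq : (2 : ℝ) * (x (r + 2) - x 0) / (r + 1)
              = ((2 : ℝ) / (r + 1)) * (x (r + 2) - x 0) := by ring
          calc (x (q0 + 2) - x q0) ^ μ
              ≤ (2 * (x (r + 2) - x 0) / (r + 1)) ^ μ :=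
                Real.rpow_le_rpow hgap0 hq0 (by linarith)
            _ = ((2 : ℝ) / (r + 1)) ^ μ * (x (r + 2) - x 0) ^ μ := by
                rw [heq, Real.mul_rpow (by positivity) hspan]
        calc |h (x q0) (x (q0 + 2)) - h (x q0) (x (q0 + 1)) - h (x (q0 + 1)) (x (q0 + 2))|
            ≤ D * (x (q0 + 2) - x q0) ^ μ := hb
          _ ≤ D * (((2 : ℝ) / (r + 1)) ^ μ * (x (r + 2) - x 0) ^ μ) := by
              exact mul_le_mul_of_nonneg_left hpow hD
          _ = D * ((2 : ℝ) / (r + 1)) ^ μ * (x (r + 2) - x 0) ^ μ := by ring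
      -- combine
      have hBsum : ∑ q ∈ range (r + 2 - 1), ((2 : ℝ) / (q + 1)) ^ μ
          = ∑ q ∈ range (r + 1 - 1), ((2 : ℝ) / (q + 1)) ^ μ + ((2 : ℝ) / (r + 1)) ^ μ := by
        rw [show r + 2 - 1 = r + 1 from rfl, show r + 1 - 1 = r from rfl, sum_range_succ]
      have key : h (x 0) (x (r + 2)) - ∑ j ∈ range (r + 2), h (x j) (x (j + 1))
          = (h (x 0) (x (r + 2)) - ∑ i ∈ range (r + 1), h (y i) (y (i + 1)))
            + (h (x q0) (x (q0 + 2)) - h (x q0) (x (q0 + 1)) - h (x (q0 + 1)) (x (q0 + 2))) := by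
        rw [hsplit]; ring
      calc |h (x 0) (x (r + 2)) - ∑ j ∈ range (r + 2), h (x j) (x (j + 1))|
          ≤ |h (x 0) (x (r + 2)) - ∑ i ∈ range (r + 1), h (y i) (y (i + 1))|
            + |h (x q0) (x (q0 + 2)) - h (x q0) (x (q0 + 1)) - h (x (q0 + 1)) (x (q0 + 2))| := by
            rw [key]; exact abs_add_le _ _
        _ ≤ D * (∑ q ∈ range (r + 1 - 1), ((2 : ℝ) / (q + 1)) ^ μ) * (x (r + 2) - x 0) ^ μ
            + D * ((2 : ℝ) / (r + 1)) ^ μ * (x (r + 2) - x 0) ^ μ := add_le_add hIH hδ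
        _ = D * (∑ q ∈ range (r + 2 - 1), ((2 : ℝ) / (q + 1)) ^ μ) * (x (r + 2) - x 0) ^ μ := by
            rw [hBsum]; ring

/-- Discrete sewing bound, general case. For `μ > 1` there is `C_μ > 0`
(depending only on `μ`) such that for any partition and any `h` on pairs of partition
points, if `|δh(s,u,t)| ≤ D (t-s)^μ` and `|h(tᵢ,tᵢ₊₁)| ≤ M (tᵢ₊₁ - tᵢ)^μ`, then
`|h(s,t)| ≤ (C_μ D + M)(t-s)^μ` for all partition points `s ≤ t`. -/
theorem stmt_3 (μ : ℝ) (hμ : 1 < μ) :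
    ∃ C : ℝ, 0 < C ∧
      ∀ (T : ℝ) (n : ℕ) (_hn : 0 < n) (t : Fin (n + 1) → ℝ),
        StrictMono t → t 0 = 0 → t (Fin.last n) = T →
        ∀ (h : ℝ → ℝ → ℝ) (D M : ℝ), 0 ≤ D → 0 ≤ M →
        (∀ i j k : Fin (n + 1), i ≤ j → j ≤ k →
          |h (t i) (t k) - h (t i) (t j) - h (t j) (t k)| ≤ D * (t k - t i) ^ μ) →
        (∀ i : Fin n,
          |h (t i.castSucc) (t i.succ)| ≤ M * (t i.succ - t i.castSucc) ^ μ) →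
        ∀ i k : Fin (n + 1), i ≤ k →
          |h (t i) (t k)| ≤ (C * D + M) * (t k - t i) ^ μ := by
  -- summability of the series
  have hsummable : Summable (fun q : ℕ => 1 / ((q : ℝ) + 1) ^ μ) := by
    have h0 : Summable (fun n : ℕ => 1 / (n : ℝ) ^ μ) :=
      Real.summable_one_div_nat_rpow.2 hμ
    have h1 := (summable_nat_add_iff 1).2 h0
    refine h1.congr fun q => ?_
    push_cast
    ring_nf
  set C : ℝ := 2 ^ μ * (∑' q : ℕ, 1 / ((q : ℝ) + 1) ^ μ) + 1 with hC
  have htsum_nonneg : 0 ≤ ∑' q : ℕ, 1 / ((q : ℝ) + 1) ^ μ :=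
    tsum_nonneg fun q => by positivity
  have hCpos : 0 < C := by
    have : (0:ℝ) ≤ 2 ^ μ * (∑' q : ℕ, 1 / ((q : ℝ) + 1) ^ μ) := by positivity
    rw [hC]; linarith
  have hCbound : ∀ r : ℕ, ∑ q ∈ range r, ((2 : ℝ) / (q + 1)) ^ μ ≤ C := by
    intro r
    have heach : ∀ q : ℕ, ((2 : ℝ) / (q + 1)) ^ μ = 2 ^ μ * (1 / ((q : ℝ) + 1) ^ μ) := by
      intro q
      rw [Real.div_rpow (by norm_num) (by positivity)]
      ring
    calc ∑ q ∈ range r, ((2 : ℝ) / (q + 1)) ^ μ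
        = 2 ^ μ * ∑ q ∈ range r, 1 / ((q : ℝ) + 1) ^ μ := by
          rw [Finset.mul_sum]; exact Finset.sum_congr rfl fun q _ => heach q
      _ ≤ 2 ^ μ * (∑' q : ℕ, 1 / ((q : ℝ) + 1) ^ μ) := by
          refine mul_le_mul_of_nonneg_left ?_ (by positivity)
          exact Summable.sum_le_tsum (range r) (fun q _ => by positivity) hsummable
      _ ≤ C := by rw [hC]; linarith
  refine ⟨C, hCpos, ?_⟩
  intro T n _hn t ht ht0 htT h D M hD hM hδ hadj i k hik
  by_cases hik' : i = k
  · subst hik'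
    have h0 : |h (t i) (t i)| ≤ 0 := by
      have := hδ i i i le_rfl le_rfl
      simpa [Real.zero_rpow (by positivity : μ ≠ 0), abs_sub_comm] using this
    have : (t i - t i) = 0 := by ring
    rw [this, Real.zero_rpow (by positivity : μ ≠ 0)]
    simpa using h0
  · have hik2 : i < k := lt_of_le_of_ne hik hik'
    have hikv : i.val < k.val := hik2
    set m : ℕ := k.val - i.val with hm
    have hmpos : 0 < m := by omega
    have hkn : k.val ≤ n := by omega
    set x : ℕ → ℝ := fun jj => t ⟨min (i.val + jj) n, lt_of_le_of_lt (min_le_right _ _)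
      (Nat.lt_succ_self n)⟩ with hx
    have hx0 : x 0 = t i := by
      simp only [hx]
      exact congrArg t (Fin.ext (show min (i.val + 0) n = i.val by omega))
    have hxm : x m = t k := by
      simp only [hx]
      exact congrArg t (Fin.ext (show min (i.val + m) n = k.val by omega))
    have hmono : ∀ jj, jj < m → x jj < x (jj + 1) := by
      intro jj hjj
      simp only [hx]
      exact ht (Fin.mk_lt_mk.2 (by omega))
    have hmem : ∀ jj, jj ≤ m → x jj ∈ Set.range t := fun jj _ => ⟨_, rfl⟩
    have HδS : ∀ a ∈ Set.range t, ∀ b ∈ Set.range t, ∀ c ∈ Set.range t, a ≤ b → b ≤ c →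
        |h a c - h a b - h b c| ≤ D * (c - a) ^ μ := by
      rintro a ⟨ia, rfl⟩ b ⟨ib, rfl⟩ c ⟨ic, rfl⟩ hab hbc
      exact hδ ia ib ic (ht.le_iff_le.1 hab) (ht.le_iff_le.1 hbc)
    have hkey := sewing_key μ D hμ hD h (Set.range t) HδS m x hmpos hmono hmem
    rw [hx0, hxm] at hkey
    -- bound on the Riemann sum
    have hspan : 0 ≤ t k - t i := by linarith [ht.le_iff_le.2 hik]
    have hsum_adj : |∑ jj ∈ range m, h (x jj) (x (jj + 1))| ≤ M * (t k - t i) ^ μ := by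
      have hterm : ∀ jj, jj < m → |h (x jj) (x (jj + 1))| ≤ M * (x (jj + 1) - x jj) ^ μ := by
        intro jj hjj
        have hp : i.val + jj < n := by omega
        have := hadj ⟨i.val + jj, hp⟩
        have hc : t (Fin.castSucc ⟨i.val + jj, hp⟩) = x jj := by
          simp only [hx]
          exact congrArg t (Fin.ext (show i.val + jj = min (i.val + jj) n by omega))
        have hs : t (Fin.succ ⟨i.val + jj, hp⟩) = x (jj + 1) := by
          simp only [hx]
          exact congrArg t (Fin.ext (show i.val + jj + 1 = min (i.val + (jj + 1)) n by omega))
        rwa [hc, hs] at this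
      have hdelta_nonneg : ∀ jj, jj < m → 0 ≤ x (jj + 1) - x jj := fun jj hjj => by
        linarith [hmono jj hjj]
      calc |∑ jj ∈ range m, h (x jj) (x (jj + 1))|
          ≤ ∑ jj ∈ range m, |h (x jj) (x (jj + 1))| := Finset.abs_sum_le_sum_abs _ _
        _ ≤ ∑ jj ∈ range m, M * (x (jj + 1) - x jj) ^ μ :=
            Finset.sum_le_sum fun jj hjj => hterm jj (Finset.mem_range.1 hjj)
        _ = M * ∑ jj ∈ range m, (x (jj + 1) - x jj) ^ μ := by rw [Finset.mul_sum]
        _ ≤ M * (∑ jj ∈ range m, (x (jj + 1) - x jj)) ^ μ := by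
            refine mul_le_mul_of_nonneg_left ?_ hM
            exact sum_rpow_le' (le_of_lt hμ) m _ hdelta_nonneg
        _ = M * (t k - t i) ^ μ := by
            rw [Finset.sum_range_sub x m, hx0, hxm]
    -- combine everything
    have htri : |h (t i) (t k)|
        ≤ |h (t i) (t k) - ∑ jj ∈ range m, h (x jj) (x (jj + 1))|
          + |∑ jj ∈ range m, h (x jj) (x (jj + 1))| := by
      simpa using abs_add_le (h (t i) (t k) - ∑ jj ∈ range m, h (x jj) (x (jj + 1)))
        (∑ jj ∈ range m, h (x jj) (x (jj + 1)))
    have hpow : (0:ℝ) ≤ (t k - t i) ^ μ := Real.rpow_nonneg hspan μ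
    have hCstep : D * (∑ q ∈ range (m - 1), ((2 : ℝ) / (q + 1)) ^ μ) * (t k - t i) ^ μ
        ≤ C * D * (t k - t i) ^ μ := by
      have h1 : D * (∑ q ∈ range (m - 1), ((2 : ℝ) / (q + 1)) ^ μ) ≤ D * C :=
        mul_le_mul_of_nonneg_left (hCbound (m - 1)) hD
      have h2 := mul_le_mul_of_nonneg_right h1 hpow
      calc D * (∑ q ∈ range (m - 1), ((2 : ℝ) / (q + 1)) ^ μ) * (t k - t i) ^ μ
          ≤ D * C * (t k - t i) ^ μ := h2
        _ = C * D * (t k - t i) ^ μ := by ring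
    calc |h (t i) (t k)|
        ≤ |h (t i) (t k) - ∑ jj ∈ range m, h (x jj) (x (jj + 1))|
          + |∑ jj ∈ range m, h (x jj) (x (jj + 1))| := htri
      _ ≤ D * (∑ q ∈ range (m - 1), ((2 : ℝ) / (q + 1)) ^ μ) * (t k - t i) ^ μ
          + M * (t k - t i) ^ μ := add_le_add hkey hsum_adj
      _ ≤ C * D * (t k - t i) ^ μ + M * (t k - t i) ^ μ := by linarith
      _ = (C * D + M) * (t k - t i) ^ μ := by ring
end

section
/- Let α, β ∈ (0,1] with α + β > 1, h ∈ C^α([0,T];ℝ), g ∈ C^β([0,T];ℝ). Then for 0 ≤ s ≤ t ≤ T the Young integral ∫ₛᵗ h dg exists as a limit of Riemann sums, and there is a constant c_{α,β} > 0 (depending only on α, β) with |∫ₛᵗ h dg| ≤ |h(s)||g(t) - g(s)| + c_{α,β} ‖h‖_{α,[s,t]} ‖g‖_{β,[s,t]} (t-s)^{α+β}. -/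
/-!
The integral is obtained by sewing the germ `Ξ a b = h a * (g b - g a)`: its defect
`Ξ a c - Ξ a b - Ξ b c = (h a - h b) * (g c - g b)` is bounded by `C (c - a) ^ σ` with
`C = Ch Cg` and `σ = α + β > 1`.

Young's point-removal argument: a partition of `[u, v]` with `n + 2` points has an interior point
whose neighbours are at most `2 (v - u) / (n + 1)` apart, and removing it changes the Riemann sum by
at most `C (2 (v - u) / (n + 1)) ^ σ`. Removing the points one by one bounds the distance between
the Riemann sum and `Ξ u v` by `K C (v - u) ^ σ` with `K = 2 ^ σ ζ(σ)`. Applying this on every interval of a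
partition `P`, a refinement of `P` changes the Riemann sum by at most
`K C ∑ |Δ P| ^ σ ≤ K C mesh(P) ^ (σ - 1) (t - s)`, so comparing two partitions through their
common refinement shows that the Riemann sums are Cauchy as the mesh tends to `0`.
-/

open Finset Filter Topology

namespace Sewing

noncomputable def riemannSum (Ξ : ℝ → ℝ → ℝ) : List ℝ → ℝ
  | a :: b :: l => Ξ a b + riemannSum Ξ (b :: l)
  | _ => 0

structure IsPartition (u v : ℝ) (l : List ℝ) : Prop where
  sorted : l.Pairwise (· ≤ ·)
  head : l.head? = some u
  last : l.getLast? = some v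

def MeshLt (δ : ℝ) (l : List ℝ) : Prop := l.IsChain fun a b => b - a < δ

def DeltaBound (Ξ : ℝ → ℝ → ℝ) (C σ s t : ℝ) : Prop :=
  ∀ a b c, s ≤ a → a ≤ b → b ≤ c → c ≤ t → |Ξ a c - Ξ a b - Ξ b c| ≤ C * (c - a) ^ σ

noncomputable def sewingConst (σ : ℝ) : ℝ := 2 ^ σ * ∑' k : ℕ, ((k : ℝ) + 1) ^ (-σ)

variable {Ξ : ℝ → ℝ → ℝ} {u v : ℝ} {l : List ℝ}

@[simp] lemma riemannSum_singleton (a : ℝ) : riemannSum Ξ [a] = 0 := rfl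

@[simp] lemma riemannSum_cons_cons (a b : ℝ) (l : List ℝ) :
    riemannSum Ξ (a :: b :: l) = Ξ a b + riemannSum Ξ (b :: l) := rfl

lemma riemannSum_append_cons (xs : List ℝ) (y : ℝ) (ys : List ℝ) :
    riemannSum Ξ (xs ++ y :: ys) = riemannSum Ξ (xs ++ [y]) + riemannSum Ξ (y :: ys) := by
  match xs with
  | [] => simp
  | [a] => simp
  | a :: b :: xs =>
    have ih := riemannSum_append_cons (b :: xs) y ys
    simp only [List.cons_append, riemannSum_cons_cons] at ih ⊢
    rw [ih, add_assoc]

lemma riemannSum_ofFn {m : ℕ} (r : Fin (m + 1) → ℝ) :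
    riemannSum Ξ (List.ofFn r) = ∑ i : Fin m, Ξ (r i.castSucc) (r i.succ) := by
  induction m with
  | zero => simp
  | succ m ih =>
    rw [List.ofFn_succ, List.ofFn_succ, riemannSum_cons_cons,
      ← List.ofFn_succ (f := fun i => r i.succ), ih, Fin.sum_univ_succ]
    rfl

namespace IsPartition

lemma mem_Icc (hl : IsPartition u v l) {x : ℝ} (hx : x ∈ l) : x ∈ Set.Icc u v := by
  obtain ⟨l₁, rfl⟩ := List.head?_eq_some_iff.1 hl.head
  obtain ⟨l₂, hl₂⟩ := List.getLast?_eq_some_iff.1 hl.last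
  have hs := hl.sorted
  constructor
  · rcases List.mem_cons.1 hx with rfl | hx
    · rfl
    · exact List.rel_of_pairwise_cons hs hx
  · rw [hl₂] at hs hx
    rcases List.mem_append.1 hx with hx | hx
    · exact (List.pairwise_append.1 hs).2.2 x hx v (List.mem_singleton_self v)
    · rw [List.mem_singleton.1 hx]

lemma le (hl : IsPartition u v l) : u ≤ v := by
  obtain ⟨l₁, rfl⟩ := List.head?_eq_some_iff.1 hl.head
  exact (hl.mem_Icc List.mem_cons_self).2

lemma eq_of_singleton {a : ℝ} (hl : IsPartition u v [a]) : a = u ∧ a = v := by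
  simpa using And.intro hl.head hl.last

lemma split {l₁ l₂ : List ℝ} {x : ℝ} (hl : IsPartition u v (l₁ ++ x :: l₂)) :
    IsPartition u x (l₁ ++ [x]) ∧ IsPartition x v (x :: l₂) := by
  have hs := List.pairwise_append.1 hl.sorted
  refine ⟨⟨hl.sorted.sublist (by simp), ?_, by simp⟩, ⟨hs.2.1, rfl, ?_⟩⟩
  · have := hl.head; cases l₁ <;> simp_all
  · have := hl.last; simp_all [List.getLast?_append]

lemma tail {a b : ℝ} (hl : IsPartition u v (a :: b :: l)) :
    a = u ∧ u ≤ b ∧ IsPartition b v (b :: l) := by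
  have ha : a = u := by simpa using hl.head
  exact ⟨ha, (hl.mem_Icc (by simp)).1, (split (l₁ := [a]) hl).2⟩

lemma of_forall_mem_Icc (hs : l.Pairwise (· ≤ ·)) (hu : u ∈ l) (hv : v ∈ l)
    (hl : ∀ x ∈ l, x ∈ Set.Icc u v) : IsPartition u v l := by
  refine ⟨hs, ?_, ?_⟩
  · obtain ⟨a, l, rfl⟩ := List.exists_cons_of_ne_nil (List.ne_nil_of_mem hu)
    have hau : a ≤ u := by
      rcases List.mem_cons.1 hu with rfl | hu
      · rfl
      · exact List.rel_of_pairwise_cons hs hu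
    simp [le_antisymm hau (hl a List.mem_cons_self).1]
  · obtain ⟨l, b, rfl⟩ := (List.eq_nil_or_concat l).resolve_left (List.ne_nil_of_mem hv)
    rw [List.concat_eq_append] at hs hv hl ⊢
    have hvb : v ≤ b := by
      rcases List.mem_append.1 hv with hv | hv
      · exact (List.pairwise_append.1 hs).2.2 v hv b (List.mem_singleton_self b)
      · rw [List.mem_singleton.1 hv]
    simp [le_antisymm (hl b (by simp)).2 hvb]

lemma ofFn {m : ℕ} {r : Fin (m + 1) → ℝ} (hr : Monotone r) (h0 : r 0 = u)
    (hm : r (Fin.last m) = v) : IsPartition u v (List.ofFn r) where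
  sorted := List.pairwise_ofFn.2 fun _ _ hij => hr hij.le
  head := by simp [List.ofFn_succ, h0]
  last := by rw [List.ofFn_succ']; simp [hm]

end IsPartition

lemma MeshLt.mono {δ δ' : ℝ} (h : MeshLt δ l) (hδ : δ ≤ δ') : MeshLt δ' l :=
  List.IsChain.imp (fun _ _ hab => hab.trans_le hδ) h

lemma meshLt_ofFn {m : ℕ} {r : Fin (m + 1) → ℝ} {δ : ℝ}
    (h : ∀ i : Fin m, r i.succ - r i.castSucc < δ) : MeshLt δ (List.ofFn r) :=
  List.isChain_ofFn.2 fun i hi => h ⟨i, by omega⟩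

lemma exists_isPartition_meshLt (huv : u ≤ v) {δ : ℝ} (hδ : 0 < δ) :
    ∃ P, IsPartition u v P ∧ MeshLt δ P := by
  obtain ⟨n, hn⟩ := exists_nat_gt ((v - u) / δ)
  set r : Fin (n + 2) → ℝ := fun i => u + i * ((v - u) / (n + 1))
  have hstep : 0 ≤ (v - u) / (n + 1) := by have := sub_nonneg.2 huv; positivity
  refine ⟨List.ofFn r, IsPartition.ofFn (fun i j hij => ?_) (by simp [r]) ?_, meshLt_ofFn ?_⟩
  · simp only [r]; gcongr; exact_mod_cast hij
  · simp only [r, Fin.val_last]; push_cast; field_simp; ring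
  · intro i
    simp only [r, Fin.val_succ, Fin.val_castSucc]
    push_cast
    rw [add_sub_add_left_eq_sub, ← sub_mul, add_sub_cancel_left, one_mul,
      div_lt_iff₀ (by positivity)]
    rw [div_lt_iff₀ hδ] at hn
    nlinarith

noncomputable def windowSum : List ℝ → ℝ
  | a :: b :: c :: l => (c - a) + windowSum (b :: c :: l)
  | _ => 0

lemma exists_window_mul_le_windowSum :
    ∀ (n : ℕ) (l : List ℝ), l.length = n + 3 →
      ∃ pre a b c d, l = pre ++ a :: b :: c :: d ∧ (n + 1) * (c - a) ≤ windowSum l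
  | 0, [a, b, c], _ => ⟨[], a, b, c, [], rfl, by simp [windowSum]⟩
  | n + 1, x :: y :: z :: l, hl => by
    obtain ⟨pre, a, b, c, d, hyzl, hwin⟩ :=
      exists_window_mul_le_windowSum n (y :: z :: l) (by simpa using hl)
    have hws : windowSum (x :: y :: z :: l) = (z - x) + windowSum (y :: z :: l) := rfl
    rw [hws]
    push_cast
    by_cases hmin : z - x ≤ c - a
    · refine ⟨[], x, y, z, l, rfl, ?_⟩
      linarith [mul_le_mul_of_nonneg_left hmin (by positivity : (0 : ℝ) ≤ n + 1)]
    · exact ⟨x :: pre, a, b, c, d, by rw [hyzl]; rfl, by linarith⟩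

-- Every gap is counted twice in `windowSum` except the first and the last, which are counted once.
lemma windowSum_add_le :
    ∀ (u b : ℝ) (l : List ℝ), IsPartition u v (u :: b :: l) →
      windowSum (u :: b :: l) + (b - u) ≤ 2 * (v - u)
  | u, b, [], hl => by
    have hb : b = v := by simpa using hl.last
    have hws : windowSum [u, b] = 0 := rfl
    linarith [hl.le]
  | u, b, c :: l, hl => by
    obtain ⟨-, -, hbl⟩ := hl.tail
    have hws : windowSum (u :: b :: c :: l) = (c - u) + windowSum (b :: c :: l) := rfl
    linarith [windowSum_add_le b c l hbl]

lemma exists_short_window {n : ℕ} (hl : IsPartition u v l) (hlen : l.length = n + 3) :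
    ∃ pre a b c d, l = pre ++ a :: b :: c :: d ∧ (n + 1) * (c - a) ≤ 2 * (v - u) := by
  obtain ⟨pre, a, b, c, d, rfl, hwin⟩ := exists_window_mul_le_windowSum n l hlen
  refine ⟨pre, a, b, c, d, rfl, hwin.trans ?_⟩
  match pre ++ a :: b :: c :: d, hl, hlen with
  | x :: y :: l, hl, _ =>
    obtain ⟨rfl, hxy, -⟩ := hl.tail
    linarith [windowSum_add_le x y l hl]

section sewingConst

variable {σ : ℝ}

lemma summable_rpow_neg_succ (hσ : 1 < σ) : Summable fun k : ℕ => ((k : ℝ) + 1) ^ (-σ) := by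
  simpa using (summable_nat_add_iff 1).2 (Real.summable_nat_rpow.2 (neg_lt_neg hσ))

lemma sewingConst_pos (hσ : 1 < σ) : 0 < sewingConst σ :=
  mul_pos (by positivity)
    ((summable_rpow_neg_succ hσ).tsum_pos (fun _ => by positivity) 0 (by simp))

lemma sum_rpow_le_sewingConst (hσ : 1 < σ) {x : ℝ} (hx : 0 ≤ x) (n : ℕ) :
    ∑ k ∈ range n, (2 * x / (k + 1)) ^ σ ≤ sewingConst σ * x ^ σ := by
  have hterm (k : ℕ) : (2 * x / (k + 1)) ^ σ = 2 ^ σ * x ^ σ * ((k : ℝ) + 1) ^ (-σ) := by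
    rw [Real.div_rpow (by positivity) (by positivity), Real.mul_rpow (by norm_num) hx,
      Real.rpow_neg (by positivity)]
    ring
  simp_rw [hterm, ← mul_sum, sewingConst, mul_right_comm _ (x ^ σ)]
  gcongr
  exact (summable_rpow_neg_succ hσ).sum_le_tsum _ fun _ _ => by positivity

end sewingConst

lemma riemannSum_rpow_le_of_meshLt {σ δ : ℝ} (hσ : 1 ≤ σ) :
    ∀ {u : ℝ} {l : List ℝ}, IsPartition u v l → MeshLt δ l →
      riemannSum (fun a b => (b - a) ^ σ) l ≤ δ ^ (σ - 1) * (v - u)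
  | u, [], hl, _ => absurd hl.head (by simp)
  | u, [a], hl, _ => by
    obtain ⟨rfl, rfl⟩ := hl.eq_of_singleton
    simp
  | u, a :: b :: l, hl, hδ => by
    obtain ⟨rfl, hab, hbl⟩ := hl.tail
    obtain ⟨hbaδ, hδl⟩ := List.isChain_cons_cons.1 hδ
    have hgap : (b - a) ^ σ ≤ δ ^ (σ - 1) * (b - a) :=
      calc (b - a) ^ σ = (b - a) ^ (σ - 1) * (b - a) := by
            rw [← Real.rpow_add_one' (sub_nonneg.2 hab) (by positivity), sub_add_cancel]
        _ ≤ δ ^ (σ - 1) * (b - a) := by gcongr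
    rw [riemannSum_cons_cons]
    linarith [riemannSum_rpow_le_of_meshLt hσ hbl hδl]

namespace DeltaBound

variable {C σ s t : ℝ}

lemma mono (hΞ : DeltaBound Ξ C σ s t) {s' t' : ℝ} (hs : s ≤ s') (ht : t' ≤ t) :
    DeltaBound Ξ C σ s' t' :=
  fun a b c ha hab hbc hc => hΞ a b c (hs.trans ha) hab hbc (hc.trans ht)

lemma apply_self (hΞ : DeltaBound Ξ C σ s t) (hσ : σ ≠ 0) {a : ℝ} (ha : a ∈ Set.Icc s t) :
    Ξ a a = 0 := by
  simpa [Real.zero_rpow hσ] using hΞ a a a ha.1 le_rfl le_rfl ha.2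

lemma abs_riemannSum_sub_le_sum (hΞ : DeltaBound Ξ C σ u v) (hC : 0 ≤ C) (hσ : 0 ≤ σ) :
    ∀ (n : ℕ) (l : List ℝ), IsPartition u v l → l.length = n + 2 →
      |riemannSum Ξ l - Ξ u v| ≤ ∑ k ∈ range n, C * (2 * (v - u) / (k + 1)) ^ σ
  | 0, [a, b], hl, _ => by
    obtain ⟨rfl, -, hb⟩ := hl.tail
    obtain rfl : b = v := by simpa using hb.last
    simp
  | n + 1, l, hl, hlen => by
    obtain ⟨pre, a, b, c, d, rfl, hwin⟩ := exists_short_window hl hlen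
    have hl' : IsPartition u v (pre ++ a :: c :: d) := by
      refine ⟨hl.sorted.sublist (by simp), ?_, ?_⟩
      · have := hl.head; cases pre <;> simp_all
      · have := hl.last; simp_all [List.getLast?_append]
    have hremove : riemannSum Ξ (pre ++ a :: b :: c :: d) =
        riemannSum Ξ (pre ++ a :: c :: d) - (Ξ a c - Ξ a b - Ξ b c) := by
      rw [riemannSum_append_cons pre a (b :: c :: d), riemannSum_append_cons pre a (c :: d)]
      simp only [riemannSum_cons_cons]
      ring
    have hs := (List.pairwise_append.1 hl.sorted).2.1
    have hab : a ≤ b := List.rel_of_pairwise_cons hs (by simp)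
    have hbc : b ≤ c := List.rel_of_pairwise_cons hs.of_cons (by simp)
    have hstep : |Ξ a c - Ξ a b - Ξ b c| ≤ C * (2 * (v - u) / (n + 1)) ^ σ := by
      refine (hΞ a b c (hl.mem_Icc (by simp)).1 hab hbc (hl.mem_Icc (by simp)).2).trans ?_
      gcongr
      · linarith
      · rw [le_div_iff₀ (by positivity)]
        linarith
    have ih := abs_riemannSum_sub_le_sum hΞ hC hσ n _ hl' (by simp at hlen ⊢; omega)
    rw [sum_range_succ, hremove, sub_right_comm]
    exact (abs_sub _ _).trans (add_le_add ih hstep)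

lemma abs_riemannSum_sub_le (hΞ : DeltaBound Ξ C σ u v) (hC : 0 ≤ C) (hσ : 1 < σ)
    (hl : IsPartition u v l) : |riemannSum Ξ l - Ξ u v| ≤ sewingConst σ * C * (v - u) ^ σ := by
  match l, hl with
  | [a], hl =>
    obtain ⟨rfl, rfl⟩ := hl.eq_of_singleton
    simp [hΞ.apply_self (by positivity) ⟨le_rfl, le_rfl⟩, Real.zero_rpow (by positivity : σ ≠ 0)]
  | a :: b :: l, hl =>
    calc |riemannSum Ξ (a :: b :: l) - Ξ u v|
        ≤ ∑ k ∈ range l.length, C * (2 * (v - u) / (k + 1)) ^ σ :=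
          hΞ.abs_riemannSum_sub_le_sum hC (by positivity) _ _ hl (by simp)
      _ ≤ C * (sewingConst σ * (v - u) ^ σ) := by
          rw [← mul_sum]
          gcongr
          exact sum_rpow_le_sewingConst hσ (sub_nonneg.2 hl.le) _
      _ = sewingConst σ * C * (v - u) ^ σ := by ring

lemma abs_riemannSum_sub_le_of_sublist (hC : 0 ≤ C) (hσ : 1 < σ) :
    ∀ {u : ℝ} {P R : List ℝ}, DeltaBound Ξ C σ u v → IsPartition u v P → IsPartition u v R →
      P.Sublist R →
      |riemannSum Ξ R - riemannSum Ξ P| ≤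
        sewingConst σ * C * riemannSum (fun a b => (b - a) ^ σ) P
  | u, [], _, _, hP, _, _ => absurd hP.head (by simp)
  | u, [a], R, hΞ, hP, hR, _ => by
    obtain ⟨rfl, rfl⟩ := hP.eq_of_singleton
    simpa [hΞ.apply_self (by positivity) ⟨le_rfl, le_rfl⟩, Real.zero_rpow (by positivity : σ ≠ 0)]
      using hΞ.abs_riemannSum_sub_le hC hσ hR
  | u, a :: p :: P, R, hΞ, hP, hR, hPR => by
    obtain ⟨rfl, hap, hpP⟩ := hP.tail
    obtain ⟨R, rfl⟩ := List.head?_eq_some_iff.1 hR.head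
    obtain ⟨r₁, r₂, rfl, hpr₁, hPr₂⟩ := List.cons_sublist_iff.1 (List.cons_sublist_cons.1 hPR)
    obtain ⟨x, y, rfl⟩ := List.append_of_mem hpr₁
    have hsplit : a :: (x ++ p :: y ++ r₂) = (a :: x) ++ p :: (y ++ r₂) := by simp
    rw [hsplit] at hR ⊢
    obtain ⟨hR₁, hR₂⟩ := hR.split
    have h₁ := (hΞ.mono le_rfl hpP.le).abs_riemannSum_sub_le hC hσ hR₁
    have h₂ := abs_riemannSum_sub_le_of_sublist hC hσ (hΞ.mono hap le_rfl) hpP hR₂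
      (List.cons_sublist_cons.2 (hPr₂.trans (List.sublist_append_right y r₂)))
    rw [riemannSum_append_cons, riemannSum_cons_cons, riemannSum_cons_cons, add_sub_add_comm,
      mul_add]
    exact (abs_add_le _ _).trans (add_le_add h₁ h₂)

lemma abs_riemannSum_sub_riemannSum_le (hΞ : DeltaBound Ξ C σ u v) (hC : 0 ≤ C) (hσ : 1 < σ)
    {P Q : List ℝ} (hP : IsPartition u v P) (hQ : IsPartition u v Q) :
    |riemannSum Ξ P - riemannSum Ξ Q| ≤ sewingConst σ * C *
      (riemannSum (fun a b => (b - a) ^ σ) P + riemannSum (fun a b => (b - a) ^ σ) Q) := by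
  set R := (P ++ Q).mergeSort fun a b => decide (a ≤ b)
  have hperm : R.Perm (P ++ Q) := List.mergeSort_perm _ _
  have hsorted : R.Pairwise (· ≤ ·) := List.pairwise_mergeSort' _ _
  have hPR : P.Sublist R := List.sublist_of_subperm_of_pairwise
    ((List.sublist_append_left P Q).subperm.trans hperm.symm.subperm) hP.sorted hsorted
  have hQR : Q.Sublist R := List.sublist_of_subperm_of_pairwise
    ((List.sublist_append_right P Q).subperm.trans hperm.symm.subperm) hQ.sorted hsorted
  have hR : IsPartition u v R := by
    refine .of_forall_mem_Icc hsorted (hPR.subset (List.mem_of_mem_head? hP.head))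
      (hPR.subset (List.mem_of_getLast? hP.last)) fun x hx => ?_
    rcases List.mem_append.1 (hperm.mem_iff.1 hx) with hx | hx
    · exact hP.mem_Icc hx
    · exact hQ.mem_Icc hx
  rw [mul_add]
  refine (abs_sub_le _ (riemannSum Ξ R) _).trans (add_le_add ?_ ?_)
  · rw [abs_sub_comm]
    exact abs_riemannSum_sub_le_of_sublist hC hσ hΞ hP hR hPR
  · exact abs_riemannSum_sub_le_of_sublist hC hσ hΞ hQ hR hQR

end DeltaBound

lemma exists_pos_mul_rpow_lt {κ : ℝ} (hκ : 0 < κ) (M : ℝ) {ε : ℝ} (hε : 0 < ε) :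
    ∃ δ > 0, M * δ ^ κ < ε := by
  have hlim : Tendsto (fun δ : ℝ => M * δ ^ κ) (𝓝[>] 0) (𝓝 0) := by
    simpa [Real.zero_rpow hκ.ne'] using
      ((Real.continuousAt_rpow_const 0 κ (Or.inr hκ.le)).tendsto.mono_left
        nhdsWithin_le_nhds).const_mul M
  obtain ⟨δ, hδε, hδ⟩ := ((hlim.eventually (gt_mem_nhds hε)).and self_mem_nhdsWithin).exists
  exact ⟨δ, hδ, hδε⟩

lemma exists_forall_abs_sub_lt_of_cauchy {X : Type*} {F : X → ℝ} {good : ℝ → X → Prop}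
    (hmono : ∀ ⦃δ δ'⦄, δ ≤ δ' → ∀ x, good δ x → good δ' x) (hne : ∀ δ > 0, ∃ x, good δ x)
    (hcauchy : ∀ ε > 0, ∃ δ > 0, ∀ x y, good δ x → good δ y → |F x - F y| < ε) :
    ∃ I, ∀ ε > 0, ∃ δ > 0, ∀ x, good δ x → |F x - I| < ε := by
  choose x hx using fun n : ℕ => hne (1 / (n + 1)) Nat.one_div_pos_of_nat
  have hfine : ∀ δ > 0, ∃ N, ∀ n ≥ N, good δ (x n) := by
    intro δ hδ
    obtain ⟨N, hN⟩ := exists_nat_one_div_lt hδ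
    exact ⟨N, fun n hn => hmono ((Nat.one_div_le_one_div hn).trans hN.le) _ (hx n)⟩
  have hseq : CauchySeq (F ∘ x) := Metric.cauchySeq_iff'.2 fun ε hε => by
    obtain ⟨δ, hδ, hF⟩ := hcauchy ε hε
    obtain ⟨N, hN⟩ := hfine δ hδ
    exact ⟨N, fun n hn => hF _ _ (hN n hn) (hN N le_rfl)⟩
  obtain ⟨I, hI⟩ := cauchySeq_tendsto_of_complete hseq
  refine ⟨I, fun ε hε => ?_⟩
  obtain ⟨δ, hδ, hF⟩ := hcauchy (ε / 2) (half_pos hε)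
  obtain ⟨N, hN⟩ := hfine δ hδ
  obtain ⟨N', hN'⟩ := Metric.tendsto_atTop.1 hI (ε / 2) (half_pos hε)
  refine ⟨δ, hδ, fun y hy => ?_⟩
  have h₁ := hF y (x (max N N')) hy (hN _ (le_max_left _ _))
  have h₂ : |F (x (max N N')) - I| < ε / 2 := hN' _ (le_max_right _ _)
  linarith [abs_sub_le (F y) (F (x (max N N'))) I]

theorem DeltaBound.exists_tendsto_riemannSum {C σ s t : ℝ} (hΞ : DeltaBound Ξ C σ s t)
    (hst : s ≤ t) (hC : 0 ≤ C) (hσ : 1 < σ) :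
    ∃ I, (∀ ε > 0, ∃ δ > 0, ∀ P, IsPartition s t P → MeshLt δ P → |riemannSum Ξ P - I| < ε) ∧
      |I - Ξ s t| ≤ sewingConst σ * C * (t - s) ^ σ := by
  have hcauchy : ∀ ε > 0, ∃ δ > 0, ∀ P Q, IsPartition s t P ∧ MeshLt δ P →
      IsPartition s t Q ∧ MeshLt δ Q → |riemannSum Ξ P - riemannSum Ξ Q| < ε := by
    intro ε hε
    obtain ⟨δ, hδ, hδε⟩ :=
      exists_pos_mul_rpow_lt (sub_pos.2 hσ) (sewingConst σ * C * (2 * (t - s))) hε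
    refine ⟨δ, hδ, fun P Q ⟨hP, hδP⟩ ⟨hQ, hδQ⟩ => ?_⟩
    have hK := sewingConst_pos hσ
    calc |riemannSum Ξ P - riemannSum Ξ Q|
        ≤ sewingConst σ * C * (riemannSum (fun a b => (b - a) ^ σ) P +
            riemannSum (fun a b => (b - a) ^ σ) Q) :=
          hΞ.abs_riemannSum_sub_riemannSum_le hC hσ hP hQ
      _ ≤ sewingConst σ * C * (δ ^ (σ - 1) * (t - s) + δ ^ (σ - 1) * (t - s)) := by
          gcongr
          exacts [riemannSum_rpow_le_of_meshLt hσ.le hP hδP,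
            riemannSum_rpow_le_of_meshLt hσ.le hQ hδQ]
      _ < ε := by linarith
  obtain ⟨I, hI⟩ := exists_forall_abs_sub_lt_of_cauchy
    (fun δ δ' hδ P hP => ⟨hP.1, hP.2.mono hδ⟩)
    (fun δ hδ => exists_isPartition_meshLt hst hδ) hcauchy
  refine ⟨I, fun ε hε => ?_, le_of_forall_pos_lt_add fun ε hε => ?_⟩
  · obtain ⟨δ, hδ, hP⟩ := hI ε hε
    exact ⟨δ, hδ, fun P hP₁ hP₂ => hP P ⟨hP₁, hP₂⟩⟩
  · obtain ⟨δ, hδ, hPI⟩ := hI ε hε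
    obtain ⟨P, hP, hδP⟩ := exists_isPartition_meshLt hst hδ
    linarith [hPI P ⟨hP, hδP⟩, hΞ.abs_riemannSum_sub_le hC hσ hP,
      abs_sub_le I (riemannSum Ξ P) (Ξ s t), abs_sub_comm I (riemannSum Ξ P)]

lemma deltaBound_young {h g : ℝ → ℝ} {α β Ch Cg s t : ℝ} (hα : 0 ≤ α) (hβ : 0 ≤ β)
    (hCh : 0 ≤ Ch) (hCg : 0 ≤ Cg)
    (hh : ∀ x ∈ Set.Icc s t, ∀ y ∈ Set.Icc s t, |h x - h y| ≤ Ch * |x - y| ^ α)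
    (hg : ∀ x ∈ Set.Icc s t, ∀ y ∈ Set.Icc s t, |g x - g y| ≤ Cg * |x - y| ^ β) :
    DeltaBound (fun a b => h a * (g b - g a)) (Ch * Cg) (α + β) s t := by
  intro a b c ha hab hbc hc
  have hmem {x : ℝ} (hax : a ≤ x) (hxc : x ≤ c) : x ∈ Set.Icc s t := ⟨ha.trans hax, hxc.trans hc⟩
  have hh' : |h a - h b| ≤ Ch * (c - a) ^ α :=
    calc |h a - h b| ≤ Ch * |a - b| ^ α := hh a (hmem le_rfl (hab.trans hbc)) b (hmem hab hbc)
      _ ≤ Ch * (c - a) ^ α := by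
          rw [abs_sub_comm, abs_of_nonneg (sub_nonneg.2 hab)]; gcongr
  have hg' : |g c - g b| ≤ Cg * (c - a) ^ β :=
    calc |g c - g b| ≤ Cg * |c - b| ^ β := hg c (hmem (hab.trans hbc) le_rfl) b (hmem hab hbc)
      _ ≤ Cg * (c - a) ^ β := by
          rw [abs_of_nonneg (sub_nonneg.2 hbc)]; gcongr
  calc |h a * (g c - g a) - h a * (g b - g a) - h b * (g c - g b)|
      = |h a - h b| * |g c - g b| := by rw [← abs_mul]; ring_nf
    _ ≤ (Ch * (c - a) ^ α) * (Cg * (c - a) ^ β) :=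
        mul_le_mul hh' hg' (abs_nonneg _) ((abs_nonneg _).trans hh')
    _ = Ch * Cg * (c - a) ^ (α + β) := by
        rw [Real.rpow_add_of_nonneg (by linarith) hα hβ]; ring

end Sewing

open Sewing

/-- Young integral for Hölder continuous functions. For `α, β ∈ (0,1]` with
`α + β > 1` there is a constant `c_{α,β} > 0` such that for any `h ∈ C^α`, `g ∈ C^β` on
`[0,T]` and `0 ≤ s ≤ t ≤ T`, the Riemann sums `Σ h(rᵢ)(g(rᵢ₊₁) - g(rᵢ))` over partitions
of `[s,t]` converge (as the mesh goes to 0) to a limit `I = ∫ₛᵗ h dg` satisfying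
`|I| ≤ |h(s)||g(t) - g(s)| + c_{α,β} ‖h‖_{α,[s,t]} ‖g‖_{β,[s,t]} (t-s)^{α+β}`. -/
theorem stmt_4 (α β : ℝ) (hα : α ∈ Set.Ioc (0:ℝ) 1) (hβ : β ∈ Set.Ioc (0:ℝ) 1)
    (hαβ : 1 < α + β) :
    ∃ c : ℝ, 0 < c ∧
      ∀ (T : ℝ) (h g : ℝ → ℝ) (Ch Cg s t : ℝ),
        0 ≤ s → s ≤ t → t ≤ T → 0 ≤ Ch → 0 ≤ Cg →
        (∀ x ∈ Set.Icc s t, ∀ y ∈ Set.Icc s t, |h x - h y| ≤ Ch * |x - y| ^ α) →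
        (∀ x ∈ Set.Icc s t, ∀ y ∈ Set.Icc s t, |g x - g y| ≤ Cg * |x - y| ^ β) →
        ∃ I : ℝ,
          (∀ ε > (0:ℝ), ∃ δ > (0:ℝ), ∀ (m : ℕ) (r : Fin (m + 1) → ℝ),
            Monotone r → r 0 = s → r (Fin.last m) = t →
            (∀ i : Fin m, r i.succ - r i.castSucc < δ) →
            |(∑ i : Fin m, h (r i.castSucc) * (g (r i.succ) - g (r i.castSucc))) - I|
              < ε) ∧
          |I| ≤ |h s| * |g t - g s| + c * Ch * Cg * (t - s) ^ (α + β) := by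
  refine ⟨sewingConst (α + β), sewingConst_pos hαβ, ?_⟩
  intro T h g Ch Cg s t _ hst _ hCh hCg hh hg
  obtain ⟨I, hlim, hI⟩ := (deltaBound_young hα.1.le hβ.1.le hCh hCg hh hg).exists_tendsto_riemannSum
    hst (mul_nonneg hCh hCg) hαβ
  refine ⟨I, fun ε hε => ?_, ?_⟩
  · obtain ⟨δ, hδ, hP⟩ := hlim ε hε
    refine ⟨δ, hδ, fun m r hr hr0 hrm hmesh => ?_⟩
    simpa only [riemannSum_ofFn] using hP _ (.ofFn hr hr0 hrm) (meshLt_ofFn hmesh)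
  · rw [← abs_mul, mul_assoc _ Ch]
    linarith [abs_sub_abs_le_abs_sub I (h s * (g t - g s))]
end

section
/- Let σ : ℝ → ℝ be C¹ with bounded and Lipschitz derivative (|σ'| ≤ K and |σ'(x) - σ'(y)| ≤ L|x-y|), and ν a finite signed measure on [-τ,0] with total variation mass m = |ν|([-τ,0]). Define f(ψ) = σ(∫_{-τ}^0 ψ dν). Then for all ψ₁, ψ₂, ψ₃, ψ₄ ∈ C([-τ,0];ℝ): |f(ψ₁) - f(ψ₂) - f(ψ₃) + f(ψ₄)| ≤ K m ‖ψ₁ - ψ₂ - ψ₃ + ψ₄‖_∞ + (L m²/1) ‖ψ₃ - ψ₄‖_∞ (‖ψ₁ - ψ₂ - ψ₃ + ψ₄‖_∞ + ‖ψ₂ - ψ₄‖_∞). -/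
open MeasureTheory

/-- Integral of a function against a finite signed measure, via the Jordan
decomposition. -/
noncomputable def signedIntegral {Ω : Type*} [MeasurableSpace Ω]
    (ν : SignedMeasure Ω) (f : Ω → ℝ) : ℝ :=
  ∫ x, f x ∂ν.toJordanDecomposition.posPart - ∫ x, f x ∂ν.toJordanDecomposition.negPart

/-!
Put `a, b, c, d = ∫ ψᵢ dν`, `x t = b + t (a - b)` and `y t = d + t (c - d)`. The derivative of
`t ↦ σ (x t) - σ (y t)` is `σ' (x t) (a - b - c + d) + (σ' (x t) - σ' (y t)) (c - d)`, and
`|x t - y t| ≤ |b - d| + |a - b - c + d|` on `[0, 1]`, so the mean value theorem bounds the second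
difference `σ a - σ b - σ c + σ d`. Linearity of `ψ ↦ ∫ ψ dν` and
`|∫ ψ dν| ≤ |ν|(univ) ‖ψ‖_∞` turn this into the claimed estimate.
-/

open Set

lemma abs_mul_sub_mul_le_of_lipschitz {g : ℝ → ℝ} {K L : ℝ} (hK : ∀ x, |g x| ≤ K)
    (hL : ∀ x y, |g x - g y| ≤ L * |x - y|) (x y u v : ℝ) :
    |g x * u - g y * v| ≤ K * |u - v| + L * |x - y| * |v| :=
  calc |g x * u - g y * v| = |g x * (u - v) + (g x - g y) * v| := by ring_nf
    _ ≤ |g x| * |u - v| + |g x - g y| * |v| := by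
      rw [← abs_mul, ← abs_mul]; exact abs_add_le _ _
    _ ≤ K * |u - v| + L * |x - y| * |v| := by gcongr <;> simp only [hK, hL]

theorem abs_second_difference_le {σ : ℝ → ℝ} {K L : ℝ} (hσ : Differentiable ℝ σ)
    (hK : ∀ x, |deriv σ x| ≤ K) (hL : ∀ x y, |deriv σ x - deriv σ y| ≤ L * |x - y|)
    (a b c d : ℝ) :
    |σ a - σ b - σ c + σ d| ≤
      K * |a - b - c + d| + L * |c - d| * (|a - b - c + d| + |b - d|) := by
  have hL0 : 0 ≤ L := by simpa using (abs_nonneg _).trans (hL 0 1)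
  let x (t : ℝ) := b + t * (a - b)
  let y (t : ℝ) := d + t * (c - d)
  have hderiv (t : ℝ) : HasDerivAt (fun t ↦ σ (x t) - σ (y t))
      (deriv σ (x t) * (a - b) - deriv σ (y t) * (c - d)) t := by
    have hx : HasDerivAt x (a - b) t := by
      simpa [x] using ((hasDerivAt_id t).mul_const (a - b)).const_add b
    have hy : HasDerivAt y (c - d) t := by
      simpa [y] using ((hasDerivAt_id t).mul_const (c - d)).const_add d
    exact ((hσ _).hasDerivAt.comp t hx).sub ((hσ _).hasDerivAt.comp t hy)
  have hgap {t : ℝ} (ht : t ∈ Ico (0 : ℝ) 1) : |x t - y t| ≤ |b - d| + |a - b - c + d| :=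
    calc |x t - y t| = |(b - d) + t * (a - b - c + d)| := by congr 1; simp only [x, y]; ring
      _ ≤ |b - d| + |t| * |a - b - c + d| := by rw [← abs_mul]; exact abs_add_le _ _
      _ ≤ |b - d| + |a - b - c + d| := by
        rw [abs_of_nonneg ht.1]
        gcongr
        exact mul_le_of_le_one_left (abs_nonneg _) ht.2.le
  have hbound (t : ℝ) (ht : t ∈ Ico (0 : ℝ) 1) :
      ‖deriv σ (x t) * (a - b) - deriv σ (y t) * (c - d)‖ ≤
        K * |a - b - c + d| + L * |c - d| * (|a - b - c + d| + |b - d|) :=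
    calc ‖deriv σ (x t) * (a - b) - deriv σ (y t) * (c - d)‖
        ≤ K * |a - b - (c - d)| + L * |x t - y t| * |c - d| :=
          abs_mul_sub_mul_le_of_lipschitz hK hL _ _ _ _
      _ ≤ K * |a - b - c + d| + L * (|b - d| + |a - b - c + d|) * |c - d| := by
          rw [show a - b - (c - d) = a - b - c + d by ring]; gcongr; exact hgap ht
      _ = _ := by ring
  have hmvt := norm_image_sub_le_of_norm_deriv_le_segment_01'
    (fun t _ ↦ (hderiv t).hasDerivWithinAt) hbound
  simp only [x, y, zero_mul, one_mul, add_zero, add_sub_cancel] at hmvt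
  rwa [Real.norm_eq_abs, show σ a - σ c - (σ b - σ d) = σ a - σ b - σ c + σ d by ring] at hmvt

section SignedIntegral

variable {X : Type*} [TopologicalSpace X] [CompactSpace X] [MeasurableSpace X]
  [OpensMeasurableSpace X] (ν : SignedMeasure X)

lemma ContinuousMap.integrable_of_compactSpace (μ : Measure X) [IsFiniteMeasure μ]
    (f : C(X, ℝ)) : Integrable f μ :=
  (BoundedContinuousFunction.mkOfCompact f).integrable μ

lemma signedIntegral_add (f g : C(X, ℝ)) :
    signedIntegral ν ⇑(f + g) = signedIntegral ν f + signedIntegral ν g := by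
  simp only [signedIntegral, ContinuousMap.coe_add, Pi.add_apply]
  rw [integral_add (f.integrable_of_compactSpace _) (g.integrable_of_compactSpace _),
    integral_add (f.integrable_of_compactSpace _) (g.integrable_of_compactSpace _)]
  ring

lemma signedIntegral_sub (f g : C(X, ℝ)) :
    signedIntegral ν ⇑(f - g) = signedIntegral ν f - signedIntegral ν g := by
  simp only [signedIntegral, ContinuousMap.coe_sub, Pi.sub_apply]
  rw [integral_sub (f.integrable_of_compactSpace _) (g.integrable_of_compactSpace _),
    integral_sub (f.integrable_of_compactSpace _) (g.integrable_of_compactSpace _)]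
  ring

lemma abs_signedIntegral_le (f : C(X, ℝ)) :
    |signedIntegral ν f| ≤ (ν.totalVariation univ).toReal * ‖f‖ := by
  set P := ν.toJordanDecomposition.posPart
  set N := ν.toJordanDecomposition.negPart
  have hbound (μ : Measure X) [IsFiniteMeasure μ] : |∫ x, f x ∂μ| ≤ μ.real univ * ‖f‖ := by
    simpa [BoundedContinuousFunction.norm_mkOfCompact] using
      (BoundedContinuousFunction.mkOfCompact f).norm_integral_le_mul_norm μ
  calc |signedIntegral ν f| ≤ |∫ x, f x ∂P| + |∫ x, f x ∂N| := abs_sub _ _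
    _ ≤ P.real univ * ‖f‖ + N.real univ * ‖f‖ := add_le_add (hbound P) (hbound N)
    _ = (ν.totalVariation univ).toReal * ‖f‖ := by
      rw [SignedMeasure.totalVariation, Measure.add_apply,
        ENNReal.toReal_add (measure_ne_top _ _) (measure_ne_top _ _), measureReal_def,
        measureReal_def, add_mul]

end SignedIntegral

theorem stmt_8_general (τ : ℝ) (σ : ℝ → ℝ) (K L : ℝ)
    (hσ : ContDiff ℝ 1 σ) (hK : ∀ x : ℝ, |deriv σ x| ≤ K)
    (hL : ∀ x y : ℝ, |deriv σ x - deriv σ y| ≤ L * |x - y|)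
    (ν : SignedMeasure (Set.Icc (-τ) (0:ℝ)))
    (m : ℝ) (hm : m = (ν.totalVariation Set.univ).toReal)
    (ψ₁ ψ₂ ψ₃ ψ₄ : C(Set.Icc (-τ) (0:ℝ), ℝ)) :
    |σ (signedIntegral ν ψ₁) - σ (signedIntegral ν ψ₂) -
        σ (signedIntegral ν ψ₃) + σ (signedIntegral ν ψ₄)| ≤
      K * m * ‖ψ₁ - ψ₂ - ψ₃ + ψ₄‖ +
        L * m ^ 2 * ‖ψ₃ - ψ₄‖ * (‖ψ₁ - ψ₂ - ψ₃ + ψ₄‖ + ‖ψ₂ - ψ₄‖) := by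
  have hK0 : 0 ≤ K := (abs_nonneg _).trans (hK 0)
  have hL0 : 0 ≤ L := by simpa using (abs_nonneg _).trans (hL 0 1)
  have hsecond : signedIntegral ν ψ₁ - signedIntegral ν ψ₂ - signedIntegral ν ψ₃ +
      signedIntegral ν ψ₄ = signedIntegral ν ⇑(ψ₁ - ψ₂ - ψ₃ + ψ₄) := by
    rw [signedIntegral_add, signedIntegral_sub, signedIntegral_sub]
  calc _ ≤ K * |signedIntegral ν ⇑(ψ₁ - ψ₂ - ψ₃ + ψ₄)| +
          L * |signedIntegral ν ⇑(ψ₃ - ψ₄)| *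
            (|signedIntegral ν ⇑(ψ₁ - ψ₂ - ψ₃ + ψ₄)| + |signedIntegral ν ⇑(ψ₂ - ψ₄)|) := by
        rw [← hsecond, signedIntegral_sub, signedIntegral_sub]
        exact abs_second_difference_le (hσ.differentiable one_ne_zero) hK hL _ _ _ _
    _ ≤ K * (m * ‖ψ₁ - ψ₂ - ψ₃ + ψ₄‖) + L * (m * ‖ψ₃ - ψ₄‖) *
          (m * ‖ψ₁ - ψ₂ - ψ₃ + ψ₄‖ + m * ‖ψ₂ - ψ₄‖) := by
        subst hm
        gcongr <;> exact abs_signedIntegral_le ν _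
    _ = _ := by ring

/-- If `σ` is C¹ with `|σ'| ≤ K` and `σ'` `L`-Lipschitz, `ν` a finite
signed measure on `[-τ,0]` of total variation mass `m`, and `f(ψ) = σ(∫ ψ dν)`, then
for all `ψ₁, ψ₂, ψ₃, ψ₄ ∈ C([-τ,0];ℝ)`:
`|f ψ₁ - f ψ₂ - f ψ₃ + f ψ₄| ≤ K m ‖ψ₁ - ψ₂ - ψ₃ + ψ₄‖ +
  L m² ‖ψ₃ - ψ₄‖ (‖ψ₁ - ψ₂ - ψ₃ + ψ₄‖ + ‖ψ₂ - ψ₄‖)`. -/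
theorem stmt_8 (τ : ℝ) (hτ : 0 < τ) (σ : ℝ → ℝ) (K L : ℝ)
    (hσ : ContDiff ℝ 1 σ) (hK : ∀ x : ℝ, |deriv σ x| ≤ K)
    (hL : ∀ x y : ℝ, |deriv σ x - deriv σ y| ≤ L * |x - y|)
    (ν : SignedMeasure (Set.Icc (-τ) (0:ℝ)))
    (m : ℝ) (hm : m = (ν.totalVariation Set.univ).toReal)
    (ψ₁ ψ₂ ψ₃ ψ₄ : C(Set.Icc (-τ) (0:ℝ), ℝ)) :
    |σ (signedIntegral ν ψ₁) - σ (signedIntegral ν ψ₂) -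
        σ (signedIntegral ν ψ₃) + σ (signedIntegral ν ψ₄)| ≤
      K * m * ‖ψ₁ - ψ₂ - ψ₃ + ψ₄‖ +
        L * m ^ 2 * ‖ψ₃ - ψ₄‖ * (‖ψ₁ - ψ₂ - ψ₃ + ψ₄‖ + ‖ψ₂ - ψ₄‖) :=
  stmt_8_general τ σ K L hσ hK hL ν m hm ψ₁ ψ₂ ψ₃ ψ₄
end
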